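/- arXiv:1807.06897 — 7 statements merged into one kernel-verified Lean document; each statement's English description precedes it below -/
import Mathlib

section
/- For all vectors v, w in ℂ^n, the quantity ‖v‖²‖w‖² − |⟨v, w⟩|² is bounded below by ‖v ⊙ v̄‖·‖w ⊙ w̄‖ − ⟨v ⊙ v̄, w ⊙ w̄⟩, where ⊙ denotes the entrywise (Hadamard) product and v̄ the entrywise complex conjugate. That is, ‖v ⊙ v̄‖‖w ⊙ w̄‖ − ⟨v ⊙ v̄, w ⊙ w̄⟩ ≤ ‖v‖²‖w‖² − |⟨v, w⟩|². -/
open Finset Complex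

/-! Replacing `⟨v, w⟩` by `∑ |vᵢ||wᵢ|` only decreases the right side, so it suffices to treat
real vectors `a`, `b`. Put `u = √(∑ a⁴) √(∑ b⁴)`, `z = ∑ a²b²` and `r = (∑ a²)(∑ b²) - (∑ ab)²`.
By Lagrange's identity `2r = ∑ᵢⱼ (aᵢbⱼ - aⱼbᵢ)²` and `2(u² - z²) = ∑ᵢⱼ (aᵢ²bⱼ² - aⱼ²bᵢ²)²`,
whose terms factor as `(aᵢbⱼ - aⱼbᵢ)² (aᵢbⱼ + aⱼbᵢ)²`. For `i ≠ j`, Cauchy–Schwarz for `a²` against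
`b²` permuted by the transposition `(i j)` gives `aᵢ²bⱼ² + aⱼ²bᵢ² ≤ u`, and AM–GM gives
`2 aᵢbᵢaⱼbⱼ ≤ z`; so `(aᵢbⱼ + aⱼbᵢ)² ≤ u + z`, whence `(u - z)(u + z) ≤ r (u + z)`. -/

theorem Finset.sum_sum_mul_sub_mul_sq {R ι : Type*} [CommRing R] (s : Finset ι) (x y : ι → R) :
    ∑ i ∈ s, ∑ j ∈ s, (x i * y j - x j * y i) ^ 2
      = 2 * ((∑ i ∈ s, x i ^ 2) * (∑ i ∈ s, y i ^ 2) - (∑ i ∈ s, x i * y i) ^ 2) := by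
  have expand (i : ι) : ∑ j ∈ s, (x i * y j - x j * y i) ^ 2 = x i ^ 2 * ∑ j ∈ s, y j ^ 2
      - 2 * (x i * y i) * ∑ j ∈ s, x j * y j + y i ^ 2 * ∑ j ∈ s, x j ^ 2 := by
    simp only [mul_sum, ← sum_sub_distrib, ← sum_add_distrib]
    exact sum_congr rfl fun j _ => by ring
  simp only [expand, sum_add_distrib, sum_sub_distrib, ← sum_mul, ← mul_sum]
  ring

theorem Real.sum_mul_comp_perm_le_sqrt_mul_sqrt {ι : Type*} [Fintype ι] (σ : Equiv.Perm ι)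
    (f g : ι → ℝ) : ∑ i, f i * g (σ i) ≤ √(∑ i, f i ^ 2) * √(∑ i, g i ^ 2) := by
  simpa only [Function.comp_apply, Equiv.sum_comp σ (fun i => g i ^ 2)] using
    Real.sum_mul_le_sqrt_mul_sqrt univ f (g ∘ σ)

theorem sub_le_of_sq_sub_sq_le_mul {u z r : ℝ} (hz : 0 ≤ z) (hr : 0 ≤ r)
    (h : u ^ 2 - z ^ 2 ≤ r * (u + z)) : u - z ≤ r := by
  nlinarith

namespace Real

variable {ι : Type*} [Fintype ι]

theorem sq_mul_sq_add_sq_mul_sq_le_sqrt_mul_sqrt (a b : ι → ℝ) {i j : ι} (hij : i ≠ j) :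
    a i ^ 2 * b j ^ 2 + a j ^ 2 * b i ^ 2 ≤ √(∑ k, a k ^ 4) * √(∑ k, b k ^ 4) := by
  classical
  calc a i ^ 2 * b j ^ 2 + a j ^ 2 * b i ^ 2
      = a i ^ 2 * b (Equiv.swap i j i) ^ 2 + a j ^ 2 * b (Equiv.swap i j j) ^ 2 := by
        rw [Equiv.swap_apply_left, Equiv.swap_apply_right]
    _ ≤ ∑ k, a k ^ 2 * b (Equiv.swap i j k) ^ 2 :=
        add_le_sum (f := fun k => a k ^ 2 * b (Equiv.swap i j k) ^ 2)
          (fun _ _ => by positivity) (mem_univ i) (mem_univ j) hij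
    _ ≤ √(∑ k, (a k ^ 2) ^ 2) * √(∑ k, (b k ^ 2) ^ 2) :=
        sum_mul_comp_perm_le_sqrt_mul_sqrt (Equiv.swap i j) (fun k => a k ^ 2) fun k => b k ^ 2
    _ = √(∑ k, a k ^ 4) * √(∑ k, b k ^ 4) := by simp only [← pow_mul]

theorem sq_mul_add_mul_le_sqrt_mul_sqrt_add (a b : ι → ℝ) {i j : ι} (hij : i ≠ j) :
    (a i * b j + a j * b i) ^ 2
      ≤ √(∑ k, a k ^ 4) * √(∑ k, b k ^ 4) + ∑ k, a k ^ 2 * b k ^ 2 := by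
  have hdiag : a i ^ 2 * b i ^ 2 + a j ^ 2 * b j ^ 2 ≤ ∑ k, a k ^ 2 * b k ^ 2 :=
    add_le_sum (f := fun k => a k ^ 2 * b k ^ 2) (fun _ _ => by positivity)
      (mem_univ i) (mem_univ j) hij
  nlinarith [sq_mul_sq_add_sq_mul_sq_le_sqrt_mul_sqrt a b hij, sq_nonneg (a i * b i - a j * b j)]

theorem sqrt_sum_pow_four_mul_sqrt_sum_pow_four_sub_le (a b : ι → ℝ) :
    √(∑ i, a i ^ 4) * √(∑ i, b i ^ 4) - ∑ i, a i ^ 2 * b i ^ 2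
      ≤ (∑ i, a i ^ 2) * (∑ i, b i ^ 2) - (∑ i, a i * b i) ^ 2 := by
  set u := √(∑ i, a i ^ 4) * √(∑ i, b i ^ 4)
  set z := ∑ i, a i ^ 2 * b i ^ 2
  have hu : u ^ 2 = (∑ i, a i ^ 4) * ∑ i, b i ^ 4 := by
    rw [mul_pow, sq_sqrt (by positivity), sq_sqrt (by positivity)]
  have hterm (i j : ι) : (a i ^ 2 * b j ^ 2 - a j ^ 2 * b i ^ 2) ^ 2
      ≤ (a i * b j - a j * b i) ^ 2 * (u + z) := by
    rcases eq_or_ne i j with rfl | hij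
    · simp
    calc (a i ^ 2 * b j ^ 2 - a j ^ 2 * b i ^ 2) ^ 2
        = (a i * b j - a j * b i) ^ 2 * (a i * b j + a j * b i) ^ 2 := by ring
      _ ≤ (a i * b j - a j * b i) ^ 2 * (u + z) := by
        gcongr; exact sq_mul_add_mul_le_sqrt_mul_sqrt_add a b hij
  have hsum := sum_le_sum fun i (_ : i ∈ univ) => sum_le_sum fun j (_ : j ∈ univ) => hterm i j
  simp only [← sum_mul, sum_sum_mul_sub_mul_sq, ← pow_mul] at hsum
  refine sub_le_of_sq_sub_sq_le_mul (by positivity) ?_ (by linarith)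
  exact sub_nonneg.2 (sum_mul_sq_le_sq_mul_sq _ _ _)

end Real

theorem stronger_cauchy_schwarz (n : ℕ) (v w : Fin n → ℂ) :
    Real.sqrt (∑ i, ‖v i‖ ^ 4) * Real.sqrt (∑ i, ‖w i‖ ^ 4)
      - ∑ i, ‖v i‖ ^ 2 * ‖w i‖ ^ 2
    ≤ (∑ i, ‖v i‖ ^ 2) * (∑ i, ‖w i‖ ^ 2)
      - ‖∑ i, (starRingEnd ℂ) (v i) * w i‖ ^ 2 := by
  have hnorm : ‖∑ i, (starRingEnd ℂ) (v i) * w i‖ ≤ ∑ i, ‖v i‖ * ‖w i‖ :=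
    (norm_sum_le _ _).trans_eq <| by simp only [norm_mul, Complex.norm_conj]
  have hnorm_sq : ‖∑ i, (starRingEnd ℂ) (v i) * w i‖ ^ 2 ≤ (∑ i, ‖v i‖ * ‖w i‖) ^ 2 := by
    gcongr
  linarith [Real.sqrt_sum_pow_four_mul_sqrt_sum_pow_four_sub_le (‖v ·‖) (‖w ·‖)]
end

section
/- If (X, Y) is pairwise completely positive, then |x_{i,j}|² ≤ y_{i,j} · y_{j,i} for all 1 ≤ i, j ≤ n. -/
open Finset

/-- A pair of matrices `(X, Y)` is pairwise completely positive (PCP) if there exist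
finite families of vectors `v k, w k : Fin n → ℂ` with
`X = Σ_k (v_k ⊙ w_k)(v_k ⊙ w_k)^*` and `Y = Σ_k (v_k ⊙ conj v_k)(w_k ⊙ conj w_k)^*`. -/
def IsPCP {n : ℕ} (X Y : Matrix (Fin n) (Fin n) ℂ) : Prop :=
  ∃ (m : ℕ) (v w : Fin m → Fin n → ℂ),
    (∀ i j, X i j = ∑ k, (v k i * w k i) * star (v k j * w k j)) ∧
    (∀ i j, Y i j = ∑ k, (v k i * star (v k i)) * star (w k j * star (w k j)))

/-! The modulus of the `k`-th term of `x_ij` regroups as `(|v_k i| |w_k j|) (|v_k j| |w_k i|)`, and the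
squares of these two factors, summed over `k`, are `y_ij` and `y_ji`. The triangle inequality
followed by Cauchy–Schwarz over `k` gives the bound. -/

theorem norm_sum_sq_le_sum_sq_mul_sum_sq {ι E : Type*} [SeminormedAddCommGroup E]
    (s : Finset ι) (z : ι → E) (a b : ι → ℝ) (hz : ∀ k ∈ s, ‖z k‖ ≤ a k * b k) :
    ‖∑ k ∈ s, z k‖ ^ 2 ≤ (∑ k ∈ s, a k ^ 2) * ∑ k ∈ s, b k ^ 2 := by
  have hsum : ‖∑ k ∈ s, z k‖ ≤ ∑ k ∈ s, a k * b k :=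
    (norm_sum_le s z).trans (sum_le_sum hz)
  calc ‖∑ k ∈ s, z k‖ ^ 2 ≤ (∑ k ∈ s, a k * b k) ^ 2 :=
        pow_le_pow_left₀ (norm_nonneg _) hsum 2
    _ ≤ (∑ k ∈ s, a k ^ 2) * ∑ k ∈ s, b k ^ 2 := sum_mul_sq_le_sq_mul_sq s a b

theorem Complex.re_mul_star_mul_star_self (x y : ℂ) :
    (x * star x * star (y * star y)).re = (‖x‖ * ‖y‖) ^ 2 := by
  simp only [Complex.star_def, Complex.mul_conj, Complex.normSq_eq_norm_sq,
    Complex.conj_ofReal, ← Complex.ofReal_mul, Complex.ofReal_re, mul_pow]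

theorem Complex.norm_mul_mul_star_mul (a b c d : ℂ) :
    ‖a * b * star (c * d)‖ = ‖a‖ * ‖d‖ * (‖c‖ * ‖b‖) := by
  simp only [Complex.star_def, norm_mul, Complex.norm_conj]
  ring

theorem pcp_abs_sq_le {n : ℕ} (X Y : Matrix (Fin n) (Fin n) ℂ) (h : IsPCP X Y) :
    ∀ i j, ‖X i j‖ ^ 2 ≤ (Y i j).re * (Y j i).re := by
  obtain ⟨m, v, w, hX, hY⟩ := h
  intro i j
  simp only [hX, hY, Complex.re_sum, Complex.re_mul_star_mul_star_self]
  exact norm_sum_sq_le_sum_sq_mul_sum_sq _ _ _ _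
    fun k _ => (Complex.norm_mul_mul_star_mul _ _ _ _).le
end

section
/- If the pair (X, X) is pairwise completely positive, then X is completely positive, i.e., X admits a decomposition X = Σ_k u_k u_k* with each u_k an entrywise non-negative real vector. -/
open Finset

/-!
Summing all entries of `X` in its two decompositions gives
`Σ_k |Σ_i v_k i w_k i|² = Σ_k ‖v_k‖² ‖w_k‖²`. By Lagrange's identity the difference of the two
sides is half of `Σ_k Σ_i Σ_j |v_k i conj (w_k j) - v_k j conj (w_k i)|²` (the equality case of
Cauchy–Schwarz), so `v_k i conj (w_k j) = v_k j conj (w_k i)` for all `k, i, j`. These relations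
make `(v_k ⊙ w_k)(v_k ⊙ w_k)^*` the rank-one matrix of the non-negative vector `|v_k ⊙ w_k|`.
-/

open ComplexConjugate

section RCLike

variable {ι κ 𝕜 : Type*} [Fintype ι] [Fintype κ] [RCLike 𝕜]

theorem sum_sum_mul_conj (a b : ι → 𝕜) :
    ∑ i, ∑ j, a i * conj (b j) = (∑ i, a i) * conj (∑ j, b j) := by
  rw [map_sum, sum_mul_sum]

/-- Both sides are the sum of all entries of `X`. -/
theorem sum_norm_sq_eq_of_decompositions {X : Matrix ι ι 𝕜} {v w : κ → ι → 𝕜}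
    (hX : ∀ i j, X i j = ∑ k, (v k i * w k i) * star (v k j * w k j))
    (hY : ∀ i j, X i j = ∑ k, (v k i * star (v k i)) * star (w k j * star (w k j))) :
    ∑ k, ‖∑ i, v k i * w k i‖ ^ 2 = ∑ k, (∑ i, ‖v k i‖ ^ 2) * (∑ j, ‖w k j‖ ^ 2) := by
  have entries_X : ∑ i, ∑ j, X i j = ∑ k, (‖∑ i, v k i * w k i‖ : 𝕜) ^ 2 := by
    simp_rw [hX, ← starRingEnd_apply]
    rw [sum_comm_cycle]
    simp_rw [sum_sum_mul_conj, RCLike.mul_conj]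
  have entries_Y : ∑ i, ∑ j, X i j
      = ∑ k, ((∑ i, ‖v k i‖ ^ 2 : ℝ) : 𝕜) * ((∑ j, ‖w k j‖ ^ 2 : ℝ) : 𝕜) := by
    simp_rw [hY, ← starRingEnd_apply, RCLike.mul_conj]
    rw [sum_comm_cycle]
    simp_rw [sum_sum_mul_conj, ← RCLike.ofReal_pow, ← RCLike.ofReal_sum, RCLike.conj_ofReal]
  exact_mod_cast entries_X.symm.trans entries_Y

theorem lagrange_identity (v w : ι → 𝕜) :
    ∑ i, ∑ j, ‖v i * conj (w j) - v j * conj (w i)‖ ^ 2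
      = 2 * ((∑ i, ‖v i‖ ^ 2) * (∑ j, ‖w j‖ ^ 2) - ‖∑ i, v i * w i‖ ^ 2) := by
  apply RCLike.ofReal_injective (K := 𝕜)
  simp only [RCLike.ofReal_sum, RCLike.ofReal_mul, RCLike.ofReal_sub, RCLike.ofReal_pow,
    RCLike.ofReal_ofNat, ← RCLike.mul_conj]
  set p := fun i => v i * conj (v i)
  set q := fun i => w i * conj (w i)
  set a := fun i => v i * w i
  have expand : ∀ i j,
      (v i * conj (w j) - v j * conj (w i)) * conj (v i * conj (w j) - v j * conj (w i))
        = p i * q j + p j * q i - a i * conj (a j) - a j * conj (a i) := fun i j => by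
    simp only [p, q, a, map_sub, map_mul, RCLike.conj_conj]
    ring
  simp only [expand, sum_sub_distrib, sum_add_distrib]
  rw [sum_comm (f := fun i j => p j * q i), sum_comm (f := fun i j => a j * conj (a i)),
    sum_mul_sum, sum_sum_mul_conj]
  ring

theorem mul_conj_eq_of_sum_norm_sq_eq (v w : κ → ι → 𝕜)
    (h : ∑ k, ‖∑ i, v k i * w k i‖ ^ 2 = ∑ k, (∑ i, ‖v k i‖ ^ 2) * (∑ j, ‖w k j‖ ^ 2))
    (k : κ) (i j : ι) :
    v k i * conj (w k j) = v k j * conj (w k i) := by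
  have hzero : ∑ k, ∑ i, ∑ j, ‖v k i * conj (w k j) - v k j * conj (w k i)‖ ^ 2 = 0 := by
    simp_rw [lagrange_identity, ← mul_sum, sum_sub_distrib, h, sub_self, mul_zero]
  have hnonneg : ∀ k i, 0 ≤ ∑ j, ‖v k i * conj (w k j) - v k j * conj (w k i)‖ ^ 2 :=
    fun _ _ => sum_nonneg fun _ _ => by positivity
  have hk := (sum_eq_zero_iff_of_nonneg fun k _ => sum_nonneg fun i _ => hnonneg k i).1
    hzero k (mem_univ k)
  have hki := (sum_eq_zero_iff_of_nonneg fun i _ => hnonneg k i).1 hk i (mem_univ i)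
  have hkij := (sum_eq_zero_iff_of_nonneg fun _ _ => by positivity).1 hki j (mem_univ j)
  rwa [sq_eq_zero_iff, norm_eq_zero, sub_eq_zero] at hkij

theorem mul_mul_conj_eq_of_mul_conj_eq {a b c d : 𝕜} (h : a * conj d = c * conj b) :
    a * b * conj (c * d) = ‖a * b‖ * ‖c * d‖ := by
  have hnorm : ‖a‖ * ‖d‖ = ‖c‖ * ‖b‖ := by
    simpa only [norm_mul, RCLike.norm_conj] using congrArg norm h
  calc a * b * conj (c * d) = (a * conj d) * (b * conj c) := by rw [map_mul]; ring
    _ = (c * conj c) * (b * conj b) := by rw [h]; ring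
    _ = ((‖a‖ * ‖d‖ : ℝ) : 𝕜) * (‖c‖ * ‖b‖ : ℝ) := by
      rw [hnorm, RCLike.mul_conj, RCLike.mul_conj]; push_cast; ring
    _ = ‖a * b‖ * ‖c * d‖ := by push_cast [norm_mul]; ring

end RCLike

theorem pcp_self_implies_cp {n : ℕ} (X : Matrix (Fin n) (Fin n) ℂ) (h : IsPCP X X) :
    ∃ (m : ℕ) (u : Fin m → Fin n → ℝ), (∀ k i, 0 ≤ u k i) ∧
      ∀ i j, X i j = ∑ k, (u k i : ℂ) * (u k j : ℂ) := by
  obtain ⟨m, v, w, hX, hY⟩ := h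
  have hcross := mul_conj_eq_of_sum_norm_sq_eq v w (sum_norm_sq_eq_of_decompositions hX hY)
  refine ⟨m, fun k i => ‖v k i * w k i‖, fun _ _ => norm_nonneg _, fun i j => ?_⟩
  rw [hX]
  exact sum_congr rfl fun k _ => mul_mul_conj_eq_of_mul_conj_eq (hcross k i j)
end

section
/- Suppose X, Y ∈ M_n(ℂ) are such that Y is diagonal, entrywise non-negative, and (X, Y) is pairwise completely positive. Then X is diagonal. -/
open Finset

theorem X_diagonal_of_pcp_Y_diagonal {n : ℕ} (X Y : Matrix (Fin n) (Fin n) ℂ)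
    (hYd : ∀ i j, i ≠ j → Y i j = 0)
    (hY : ∀ i j, (Y i j).im = 0 ∧ 0 ≤ (Y i j).re)
    (h : IsPCP X Y) :
    ∀ i j, i ≠ j → X i j = 0 := by
  intro i j hij
  obtain ⟨m, v, w, hX, hYeq⟩ := h
  have key : ∀ k, v k i = 0 ∨ w k j = 0 := by
    intro k
    have h0 : (∑ k, (Complex.normSq (v k i) * Complex.normSq (w k j) : ℝ)) = 0 := by
      have hz : (∑ k, ((v k i * star (v k i)) * star (w k j * star (w k j)))) = 0 := by
        rw [← hYeq i j, hYd i j hij]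
      have heq : ∀ k, (v k i * star (v k i)) * star (w k j * star (w k j)) =
          ((Complex.normSq (v k i) * Complex.normSq (w k j) : ℝ) : ℂ) := by
        intro k
        have : (v k i * star (v k i)) * star (w k j * star (w k j)) =
            (v k i * star (v k i)) * (w k j * star (w k j)) := by
          rw [star_mul', star_star]
          ring
        rw [this, Complex.star_def, Complex.mul_conj, Complex.mul_conj]
        push_cast
        ring
      rw [Finset.sum_congr rfl (fun k _ => heq k)] at hz
      exact_mod_cast hz
    have := (Finset.sum_eq_zero_iff_of_nonneg
      (fun k _ => mul_nonneg (Complex.normSq_nonneg _) (Complex.normSq_nonneg _))).mp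
      h0 k (mem_univ k)
    rcases mul_eq_zero.mp this with h1 | h1
    · exact Or.inl (Complex.normSq_eq_zero.mp h1)
    · exact Or.inr (Complex.normSq_eq_zero.mp h1)
  rw [hX i j]
  apply Finset.sum_eq_zero
  intro k _
  rcases key k with h1 | h1 <;> simp [h1]
end

section
/- If (X, Y) is pairwise completely positive and P ∈ M_n(ℝ) is entrywise non-negative, then (X + diag(P), Y + P) is pairwise completely positive, where diag(P) is the diagonal matrix whose diagonal agrees with that of P. -/
open Finset

theorem pcp_add_nonneg {n : ℕ} (X Y : Matrix (Fin n) (Fin n) ℂ)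
    (P : Matrix (Fin n) (Fin n) ℝ) (hP : ∀ i j, 0 ≤ P i j) (h : IsPCP X Y) :
    IsPCP (X + Matrix.diagonal fun i => (P i i : ℂ)) (Y + P.map (fun r => (r : ℂ))) := by
  obtain ⟨m, v, w, hX, hY⟩ := h
  set c : Fin n → Fin n → ℝ := fun a b => Real.sqrt (Real.sqrt (P a b)) with hc
  have hc4 : ∀ a b, (c a b * c a b) * (c a b * c a b) = P a b := by
    intro a b
    rw [hc]
    rw [Real.mul_self_sqrt (Real.sqrt_nonneg _), Real.mul_self_sqrt (hP a b)]
  refine ⟨m + n * n,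
    fun k => Fin.addCases (fun k => v k)
      (fun k i => if i = (finProdFinEquiv.symm k).1 then
        ((c (finProdFinEquiv.symm k).1 (finProdFinEquiv.symm k).2 : ℝ) : ℂ) else 0) k,
    fun k => Fin.addCases (fun k => w k)
      (fun k j => if j = (finProdFinEquiv.symm k).2 then
        ((c (finProdFinEquiv.symm k).1 (finProdFinEquiv.symm k).2 : ℝ) : ℂ) else 0) k,
    ?_, ?_⟩
  · intro i j
    rw [Fin.sum_univ_add]
    simp only [Fin.addCases_left, Fin.addCases_right]
    rw [← Equiv.sum_comp (finProdFinEquiv (m := n) (n := n))]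
    simp only [Equiv.symm_apply_apply]
    rw [Fintype.sum_prod_type, Matrix.add_apply, hX i j]
    congr 1
    rw [eq_comm, Finset.sum_eq_single i]
    · rw [Finset.sum_eq_single i]
      · by_cases hij : i = j
        · subst hij
          simp only [if_pos rfl, Matrix.diagonal_apply_eq]
          push_cast [← hc4 i i]
          simp [mul_comm]
        · simp [Ne.symm hij, hij, Matrix.diagonal_apply_ne _ hij]
      · intro b _ hb
        simp [Ne.symm hb]
      · simp
    · intro a _ ha
      apply Finset.sum_eq_zero
      intro b _
      simp [Ne.symm ha]
    · simp
  · intro i j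
    rw [Fin.sum_univ_add]
    simp only [Fin.addCases_left, Fin.addCases_right]
    rw [← Equiv.sum_comp (finProdFinEquiv (m := n) (n := n))]
    simp only [Equiv.symm_apply_apply]
    rw [Fintype.sum_prod_type, Matrix.add_apply, hY i j]
    congr 1
    rw [eq_comm, Finset.sum_eq_single i]
    · rw [Finset.sum_eq_single j]
      · simp only [if_pos rfl, Matrix.map_apply]
        push_cast [← hc4 i j]
        simp [mul_comm, mul_assoc, mul_left_comm]
      · intro b _ hb
        simp [Ne.symm hb]
      · simp
    · intro a _ ha
      apply Finset.sum_eq_zero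
      intro b _
      simp [Ne.symm ha]
    · simp
end

section
/- Suppose X, Y ∈ M_n(ℂ) have the same diagonal entries, X is completely positive (X = Σ_k x_k x_k* with entrywise non-negative real vectors x_k), and Y − X is entrywise non-negative real. Then (X, Y) is pairwise completely positive. -/
open Finset

theorem pcp_of_cp_le {n : ℕ} (X Y : Matrix (Fin n) (Fin n) ℂ)
    (hdiag : ∀ i, X i i = Y i i)
    (hX : ∃ (m : ℕ) (u : Fin m → Fin n → ℝ), (∀ k i, 0 ≤ u k i) ∧
      ∀ i j, X i j = ∑ k, (u k i : ℂ) * (u k j : ℂ))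
    (hYX : ∀ i j, (Y i j - X i j).im = 0 ∧ 0 ≤ (Y i j - X i j).re) :
    IsPCP X Y := by
  obtain ⟨m, u, hu, hXu⟩ := hX
  set d : Fin n → Fin n → ℝ := fun a b => (Y a b - X a b).re with hd
  have hd0 : ∀ a b, 0 ≤ d a b := fun a b => (hYX a b).2
  have hdc : ∀ a b, Y a b = X a b + (d a b : ℂ) := by
    intro a b
    have h1 := (hYX a b).1
    have h2 : (Y a b - X a b) = ((d a b : ℝ) : ℂ) := by
      apply Complex.ext
      · simp [hd]
      · simp [h1]
    linear_combination h2
  have hdd : ∀ a, d a a = 0 := by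
    intro a; simp [hd, hdiag a]
  -- index equivalence
  let E : Fin (m + n * n) ≃ (Fin m ⊕ (Fin n × Fin n)) :=
    finSumFinEquiv.symm.trans (Equiv.sumCongr (Equiv.refl (Fin m)) finProdFinEquiv.symm)
  let t : Fin n → Fin n → ℝ := fun a b => Real.sqrt (Real.sqrt (d a b))
  have ht2 : ∀ a b, t a b * t a b = Real.sqrt (d a b) := fun a b =>
    Real.mul_self_sqrt (Real.sqrt_nonneg _)
  have ht4 : ∀ a b, (t a b * t a b) * (t a b * t a b) = d a b := by
    intro a b; rw [ht2, Real.mul_self_sqrt (hd0 a b)]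
  let V : (Fin m ⊕ (Fin n × Fin n)) → Fin n → ℂ := fun s i =>
    match s with
    | Sum.inl k => (Real.sqrt (u k i) : ℂ)
    | Sum.inr (a, b) => if i = a then (t a b : ℂ) else 0
  let W : (Fin m ⊕ (Fin n × Fin n)) → Fin n → ℂ := fun s i =>
    match s with
    | Sum.inl k => (Real.sqrt (u k i) : ℂ)
    | Sum.inr (a, b) => if i = b then (t a b : ℂ) else 0
  refine ⟨m + n * n, fun k => V (E k), fun k => W (E k), ?_, ?_⟩
  · intro i j
    rw [show (∑ k, (V (E k) i * W (E k) i) * star (V (E k) j * W (E k) j))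
        = ∑ s, (V s i * W s i) * star (V s j * W s j) from
        Equiv.sum_comp E (fun s => (V s i * W s i) * star (V s j * W s j))]
    rw [Fintype.sum_sum_type]
    have hinr : (∑ p : Fin n × Fin n,
        (V (Sum.inr p) i * W (Sum.inr p) i) * star (V (Sum.inr p) j * W (Sum.inr p) j)) = 0 := by
      apply Finset.sum_eq_zero
      intro p _
      obtain ⟨a, b⟩ := p
      by_cases hab : a = b
      · subst hab
        have ht0 : ((t a a : ℝ) : ℂ) = 0 := by simp [t, hdd a]
        simp only [V, W, ht0, ite_self]
        simp
      · have h0 : (if i = a then (t a b : ℂ) else 0) * (if i = b then (t a b : ℂ) else 0) = 0 := by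
          by_cases hia : i = a
          · rw [if_neg (fun h => hab (hia.symm.trans h)), mul_zero]
          · rw [if_neg hia, zero_mul]
        simp only [V, W]
        rw [h0, zero_mul]
    rw [hinr, add_zero, hXu i j]
    apply Finset.sum_congr rfl
    intro k _
    simp only [V, W, Complex.star_def, map_mul, Complex.conj_ofReal, ← Complex.ofReal_mul,
      Real.mul_self_sqrt (hu k i), Real.mul_self_sqrt (hu k j)]
  · intro i j
    rw [show (∑ k, (V (E k) i * star (V (E k) i)) * star (W (E k) j * star (W (E k) j)))
        = ∑ s, (V s i * star (V s i)) * star (W s j * star (W s j)) from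
        Equiv.sum_comp E (fun s => (V s i * star (V s i)) * star (W s j * star (W s j)))]
    rw [Fintype.sum_sum_type]
    have hinl : (∑ k : Fin m,
        (V (Sum.inl k) i * star (V (Sum.inl k) i)) * star (W (Sum.inl k) j * star (W (Sum.inl k) j)))
        = X i j := by
      rw [hXu i j]
      apply Finset.sum_congr rfl
      intro k _
      simp only [V, W, Complex.star_def, Complex.conj_ofReal, ← Complex.ofReal_mul,
        Real.mul_self_sqrt (hu k i), Real.mul_self_sqrt (hu k j)]
    have hinr : (∑ p : Fin n × Fin n,
        (V (Sum.inr p) i * star (V (Sum.inr p) i)) * star (W (Sum.inr p) j * star (W (Sum.inr p) j)))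
        = (d i j : ℂ) := by
      rw [Fintype.sum_prod_type]
      rw [Finset.sum_eq_single i]
      · rw [Finset.sum_eq_single j]
        · simp only [V, W]
          simp only [if_true]
          simp only [Complex.star_def, map_mul, Complex.conj_ofReal]
          rw [← ht4 i j]
          push_cast
          ring
        · intro b _ hb
          simp only [V, W]
          rw [if_neg (Ne.symm hb)]
          simp
        · intro h; exact absurd (Finset.mem_univ j) h
      · intro a _ ha
        apply Finset.sum_eq_zero
        intro b _
        simp only [V, W]
        rw [if_neg (Ne.symm ha)]
        simp
      · intro h; exact absurd (Finset.mem_univ i) h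
    rw [hinl, hinr, hdc i j]
end

section
/- Let X, Y ∈ M_2(ℂ) satisfy: X is positive semidefinite, Y is entrywise non-negative real, x_{1,1} = y_{1,1}, x_{2,2} = y_{2,2}, and |x_{1,2}|² ≤ y_{1,2}·y_{2,1}. Then (X, Y) is pairwise completely positive. -/
/-!
Write `X = !![a, c̄; c, d]` and `Y = !![a, p; q, d]`. Two pairs suffice: `v₁ = (1, t)`,
`w₁ = (√a, √p)` produce the off-diagonal entry `c = t √a √p` of `X` and the first row of `Y`,
and `v₂ = (0, 1)`, `w₂ = (√(q - |t|² a), √(d - |t|² p))` fill in what is missing from the second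
row. The radicands are nonnegative because `|c|² ≤ a d` (positivity of `det X`) and
`|c|² ≤ p q`.
-/

open Finset
open scoped ComplexOrder

open Complex

theorem isPCP_fin_two_param (t : ℂ) (α β γ δ : ℝ) :
    IsPCP !![(α : ℂ) ^ 2, star (t * α * β); t * α * β, normSq t * (β : ℂ) ^ 2 + (δ : ℂ) ^ 2]
      !![(α : ℂ) ^ 2, (β : ℂ) ^ 2; normSq t * (α : ℂ) ^ 2 + (γ : ℂ) ^ 2,
        normSq t * (β : ℂ) ^ 2 + (δ : ℂ) ^ 2] := by
  refine ⟨2, ![![1, t], ![0, 1]], ![![α, β], ![γ, δ]], ?_, ?_⟩ <;>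
    intro i j <;> fin_cases i <;> fin_cases j <;>
    simp [Fin.sum_univ_two, ← mul_conj] <;> ring

theorem exists_factor_of_normSq_le {a d p q : ℝ} {c : ℂ} (ha : 0 ≤ a) (hd : 0 ≤ d) (hp : 0 ≤ p)
    (hq : 0 ≤ q) (hcad : normSq c ≤ a * d) (hcpq : normSq c ≤ p * q) :
    ∃ t : ℂ, t * √a * √p = c ∧ normSq t * a ≤ q ∧ normSq t * p ≤ d := by
  rcases eq_or_ne c 0 with rfl | hc
  · exact ⟨0, by simp, by simpa using hq, by simpa using hd⟩
  have hc' : 0 < normSq c := normSq_pos.mpr hc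
  have ha' : 0 < a := pos_of_mul_pos_left (hc'.trans_le hcad) hd
  have hp' : 0 < p := pos_of_mul_pos_left (hc'.trans_le hcpq) hq
  have hsqrt : ((√a : ℝ) : ℂ) * √p ≠ 0 := by simp [Real.sqrt_eq_zero', ha', hp']
  have hnormSq : normSq (c / (√a * √p)) = normSq c / (a * p) := by
    rw [normSq_div, normSq_mul, normSq_ofReal, normSq_ofReal, Real.mul_self_sqrt ha,
      Real.mul_self_sqrt hp]
  refine ⟨c / (√a * √p), by rw [mul_assoc, div_mul_cancel₀ _ hsqrt], ?_, ?_⟩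
  · rw [hnormSq, div_mul_eq_mul_div, div_le_iff₀ (by positivity)]
    nlinarith
  · rw [hnormSq, div_mul_eq_mul_div, div_le_iff₀ (by positivity)]
    nlinarith

theorem isPCP_fin_two {a d p q : ℝ} {c : ℂ} (ha : 0 ≤ a) (hd : 0 ≤ d) (hp : 0 ≤ p)
    (hq : 0 ≤ q) (hcad : normSq c ≤ a * d) (hcpq : normSq c ≤ p * q) :
    IsPCP !![(a : ℂ), star c; c, d] !![(a : ℂ), p; q, d] := by
  obtain ⟨t, rfl, hta, htp⟩ := exists_factor_of_normSq_le ha hd hp hq hcad hcpq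
  have hsq : ∀ {x : ℝ}, 0 ≤ x → ((√x : ℝ) : ℂ) ^ 2 = x := fun hx => by
    rw [← ofReal_pow, Real.sq_sqrt hx]
  simpa [hsq, ha, hp, sub_nonneg.mpr hta, sub_nonneg.mpr htp] using
    isPCP_fin_two_param t √a √p √(q - normSq t * a) √(d - normSq t * p)

theorem pcp_two_dim (X Y : Matrix (Fin 2) (Fin 2) ℂ)
    (hX : X.PosSemidef)
    (hY : ∀ i j, (Y i j).im = 0 ∧ 0 ≤ (Y i j).re)
    (h11 : X 0 0 = Y 0 0) (h22 : X 1 1 = Y 1 1)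
    (h12 : ‖X 0 1‖ ^ 2 ≤ (Y 0 1).re * (Y 1 0).re) :
    IsPCP X Y := by
  have hX01 : X 0 1 = star (X 1 0) := (hX.1.apply 0 1).symm
  have hXdiag : ∀ i, X i i = (X i i).re ∧ 0 ≤ (X i i).re := fun i => by
    obtain ⟨hre, him⟩ := nonneg_iff.mp hX.diag_nonneg
    exact ⟨ext rfl (by simp [← him]), hre⟩
  have hYreal : ∀ i j, Y i j = (Y i j).re := fun i j => ext rfl (by simp [(hY i j).1])
  have hdet : normSq (X 1 0) ≤ (X 0 0).re * (X 1 1).re := by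
    have hdet := hX.det_nonneg
    rw [Matrix.det_fin_two, hX01, (hXdiag 0).1, (hXdiag 1).1, star_def,
      ← normSq_eq_conj_mul_self] at hdet
    exact sub_nonneg.mp (by exact_mod_cast hdet)
  have hcpq : normSq (X 1 0) ≤ (Y 0 1).re * (Y 1 0).re := by
    rwa [hX01, star_def, norm_conj, ← normSq_eq_norm_sq] at h12
  rw [X.eta_fin_two, Y.eta_fin_two, ← h11, ← h22, hX01, (hXdiag 0).1, (hXdiag 1).1,
    hYreal 0 1, hYreal 1 0]
  exact isPCP_fin_two (hXdiag 0).2 (hXdiag 1).2 (hY 0 1).2 (hY 1 0).2 hdet hcpq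
end
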